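/- arXiv:1802.08877 — 3 statements merged into one kernel-verified Lean document; each statement's English description precedes it below -/
import Mathlib

section
/- Let H be a metabelian group, and suppose Z ≤ Z(H) is a central subgroup with Z ∩ {[a,b] : a,b ∈ H} = {1} and H/Z has exponent dividing e. Then [x,y]^e = 1 for all x, y ∈ H. -/
/-- The commutator convention of the paper: `[x,y] = x⁻¹y⁻¹xy`. -/
def pcomm {G : Type*} [Group G] (x y : G) : G := x⁻¹ * y⁻¹ * x * y

/-- Left-normed iterated commutator `[x, _k y]` with `[x, _0 y] = x`. -/
def pcommIter {G : Type*} [Group G] (x y : G) : ℕ → G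
  | 0 => x
  | k + 1 => pcomm (pcommIter x y k) y

open scoped commutatorElement in
lemma pcomm_mem_commutator {H : Type*} [Group H] (a b : H) :
    pcomm a b ∈ commutator H := by
  have h : pcomm a b = ⁅a⁻¹, b⁻¹⁆ := by
    simp [pcomm, commutatorElement_def]
  rw [h, commutator_def]
  exact Subgroup.commutator_mem_commutator (Subgroup.mem_top _) (Subgroup.mem_top _)

lemma pcomm_inv {H : Type*} [Group H] (a b : H) :
    (pcomm a b)⁻¹ = pcomm b a := by
  unfold pcomm; group

/-- if `H` is metabelian, `Z` is a central subgroup meeting the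
set of commutators trivially, and `H/Z` has exponent dividing `e`
(i.e. `x^e ∈ Z` for all `x`), then `[x,y]^e = 1` for all `x, y ∈ H`. -/
theorem metabelian_cp_cover_comm_exponent {H : Type*} [Group H]
    (Z : Subgroup H) (hZc : Z ≤ Subgroup.center H)
    (hZK : ∀ z ∈ Z, (∃ a b : H, z = pcomm a b) → z = 1)
    (hmet : ∀ a b : H, a ∈ commutator H → b ∈ commutator H → a * b = b * a)
    (e : ℕ) (hexp : ∀ x : H, x ^ e ∈ Z) :
    ∀ x y : H, (pcomm x y) ^ e = 1 := by
  intro x y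
  have hK : ∀ a b : H, pcomm a b ∈ commutator H := pcomm_mem_commutator
  -- `u ↦ pcomm u y` is multiplicative on the commutator subgroup
  have L1 : ∀ u v : H, u ∈ commutator H → v ∈ commutator H →
      pcomm (u * v) y = pcomm u y * pcomm v y := by
    intro u v hu hv
    have h1 : pcomm u y * v = v * pcomm u y := hmet _ _ (hK u y) hv
    calc pcomm (u * v) y = v⁻¹ * (pcomm u y * v) * pcomm v y := by
          unfold pcomm; group
      _ = v⁻¹ * (v * pcomm u y) * pcomm v y := by rw [h1]
      _ = pcomm u y * pcomm v y := by group
  -- commutators of commutator-subgroup elements with powers of y are single commutators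
  have LB : ∀ n : ℕ, ∀ c : H, c ∈ commutator H →
      ∃ w ∈ commutator H, pcomm c (y ^ n) = pcomm w y := by
    intro n
    induction n with
    | zero =>
      intro c hc
      exact ⟨1, Subgroup.one_mem _, by unfold pcomm; group⟩
    | succ n ih =>
      intro c hc
      obtain ⟨w, hw, hweq⟩ := ih c hc
      have hconj : (y ^ n)⁻¹ * c * y ^ n ∈ commutator H := by
        have := Subgroup.Normal.conj_mem (inferInstance : (commutator H).Normal)
          c hc (y ^ n)⁻¹
        simpa using this
      have key : pcomm c (y ^ (n + 1)) =
          pcomm c (y ^ n) * pcomm ((y ^ n)⁻¹ * c * y ^ n) y := by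
        unfold pcomm; group
      refine ⟨w * ((y ^ n)⁻¹ * c * y ^ n), mul_mem hw hconj, ?_⟩
      rw [key, hweq, L1 _ _ hw hconj]
  -- main expansion: [x, y^n] = [x,y]^n * [w, y]
  have LC : ∀ n : ℕ, ∃ w ∈ commutator H,
      pcomm x (y ^ n) = (pcomm x y) ^ n * pcomm w y := by
    intro n
    induction n with
    | zero =>
      exact ⟨1, Subgroup.one_mem _, by unfold pcomm; group⟩
    | succ n ih =>
      obtain ⟨w, hw, h1⟩ := ih
      obtain ⟨w2, hw2, h2⟩ := LB n (pcomm x y) (hK x y)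
      have key : pcomm x (y ^ (n + 1)) =
          pcomm x (y ^ n) * (pcomm x y * pcomm (pcomm x y) (y ^ n)) := by
        unfold pcomm; group
      refine ⟨w * w2, mul_mem hw hw2, ?_⟩
      rw [key, h1, h2, L1 _ _ hw hw2]
      have hcomm : pcomm w y * pcomm x y = pcomm x y * pcomm w y :=
        hmet _ _ (hK w y) (hK x y)
      rw [pow_succ, mul_assoc, mul_assoc, ← mul_assoc (pcomm w y), hcomm, mul_assoc]
  obtain ⟨w, hw, hwe⟩ := LC e
  have hy : y ^ e ∈ Subgroup.center H := hZc (hexp y)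
  have hc : x * y ^ e = y ^ e * x := Subgroup.mem_center_iff.mp hy x
  have h0 : pcomm x (y ^ e) = 1 := by
    show x⁻¹ * (y ^ e)⁻¹ * x * (y ^ e) = 1
    rw [mul_assoc (x⁻¹ * (y ^ e)⁻¹), hc]
    group
  have hmul : (pcomm x y) ^ e * pcomm w y = 1 := by rw [← hwe]; exact h0
  have hce : (pcomm x y) ^ e = pcomm y w := by
    rw [← pcomm_inv w y]
    rwa [mul_eq_one_iff_eq_inv] at hmul
  exact hZK _ (hexp (pcomm x y)) ⟨y, w, hce⟩
end

section
/- Let G be a nilpotent group of class at most 5 and x, y ∈ G. Then [x,y,x,y,x] = [x,y,y,x,x] and [x,y,x,y,y] = [x,y,y,x,y], where commutators are left-normed. -/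
open scoped commutatorElement

section

variable {G : Type*} [Group G]

lemma pcomm_eq_commutatorElement (a b : G) : pcomm a b = ⁅a⁻¹, b⁻¹⁆ := by
  simp only [pcomm, commutatorElement_def, inv_inv]

lemma pcomm_eq_one_iff_commute {a b : G} : pcomm a b = 1 ↔ Commute a b := by
  rw [pcomm_eq_commutatorElement, commutatorElement_eq_one_iff_commute, Commute.inv_inv_iff]

lemma pcomm_mem_commutator_s2 {H K : Subgroup G} {a b : G} (ha : a ∈ H) (hb : b ∈ K) :
    pcomm a b ∈ ⁅H, K⁆ := by
  rw [pcomm_eq_commutatorElement]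
  exact Subgroup.commutator_mem_commutator (inv_mem ha) (inv_mem hb)

lemma pcomm_mul_right_of_mem_center {w : G} (hw : w ∈ Subgroup.center G) (v z : G) :
    pcomm (v * w) z = pcomm v z := by
  have hcomm : w * (v⁻¹ * z⁻¹ * v) = (v⁻¹ * z⁻¹ * v) * w :=
    (Subgroup.mem_center_iff.mp hw _).symm
  calc pcomm (v * w) z = w⁻¹ * ((v⁻¹ * z⁻¹ * v) * w) * z := by simp only [pcomm]; group
    _ = pcomm v z := by rw [← hcomm]; simp only [pcomm]; group

/-- The identity behind the theorem; it fails for a general `c` in place of `[x,y]`. -/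
lemma pcomm_pcomm_pcomm_eq_mul (x y : G) :
    pcomm (pcomm (pcomm x y) x) y =
      pcomm (pcomm (pcomm x y) x) (pcomm (pcomm x y) y) * pcomm (pcomm (pcomm x y) y) x *
        pcomm (pcomm (pcomm x y) (y * x)) (pcomm x y) := by
  simp only [pcomm]
  group

namespace Subgroup

/-- The three subgroups lemma modulo a normal subgroup. -/
lemma commutator_commutator_le_of_rotate {H₁ H₂ H₃ N : Subgroup G} [N.Normal]
    (h₁ : ⁅⁅H₂, H₃⁆, H₁⁆ ≤ N) (h₂ : ⁅⁅H₃, H₁⁆, H₂⁆ ≤ N) : ⁅⁅H₁, H₂⁆, H₃⁆ ≤ N := by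
  have key : ∀ A B C : Subgroup G, ⁅⁅A, B⁆, C⁆ ≤ N ↔
      ⁅⁅A.map (QuotientGroup.mk' N), B.map (QuotientGroup.mk' N)⁆,
        C.map (QuotientGroup.mk' N)⁆ = ⊥ := fun A B C => by
    rw [← map_commutator, ← map_commutator, map_eq_bot_iff, QuotientGroup.ker_mk']
  rw [key] at *
  exact commutator_commutator_eq_bot_of_rotate h₁ h₂

lemma commutator_lowerCentralSeries_le (S : Subgroup G) [S.Normal] (m n : ℕ) :
    ⁅S.lowerCentralSeries m, S.lowerCentralSeries n⁆ ≤ S.lowerCentralSeries (m + n + 1) := by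
  induction n generalizing m with
  | zero => rfl
  | succ n ih =>
    rw [lowerCentralSeries_succ, commutator_comm (S.lowerCentralSeries m),
      show m + (n + 1) + 1 = m + n + 1 + 1 by omega]
    apply commutator_commutator_le_of_rotate
    · rw [commutator_comm S, ← lowerCentralSeries_succ]
      exact (ih (m + 1)).trans_eq (by rw [show m + 1 + n + 1 = m + n + 1 + 1 by omega])
    · exact commutator_mono (ih m) le_rfl

lemma pcomm_mem_lowerCentralSeries_succ {S : Subgroup G} {a b : G} {n : ℕ}
    (ha : a ∈ S.lowerCentralSeries n) (hb : b ∈ S) : pcomm a b ∈ S.lowerCentralSeries (n + 1) :=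
  pcomm_mem_commutator_s2 ha hb

lemma mem_center_of_mem_lowerCentralSeries {n : ℕ}
    (hn : (⊤ : Subgroup G).lowerCentralSeries (n + 1) = ⊥) {w : G}
    (hw : w ∈ (⊤ : Subgroup G).lowerCentralSeries n) : w ∈ center G :=
  mem_center_iff.mpr fun g => by
    have h := pcomm_mem_lowerCentralSeries_succ hw (mem_top g)
    rw [hn, mem_bot, pcomm_eq_one_iff_commute] at h
    exact h.symm

end Subgroup

end

open Subgroup in
/-- in a nilpotent group of class at most 5,
`[x,y,x,y,x] = [x,y,y,x,x]` and `[x,y,x,y,y] = [x,y,y,x,y]`. -/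
theorem class_le_five_weight_five_identities {G : Type*} [Group G]
    (h5 : (⊤ : Subgroup G).lowerCentralSeries 5 = ⊥) (x y : G) :
    pcomm (pcomm (pcomm (pcomm x y) x) y) x
        = pcomm (pcomm (pcomm (pcomm x y) y) x) x ∧
      pcomm (pcomm (pcomm (pcomm x y) x) y) y
        = pcomm (pcomm (pcomm (pcomm x y) y) x) y := by
  set γ := (⊤ : Subgroup G).lowerCentralSeries
  have hc : pcomm x y ∈ γ 1 := pcomm_mem_lowerCentralSeries_succ (mem_top x) (mem_top y)
  have hc₂ : ∀ z, pcomm (pcomm x y) z ∈ γ 2 := fun z =>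
    pcomm_mem_lowerCentralSeries_succ hc (mem_top z)
  have hw₁ : pcomm (pcomm (pcomm x y) x) (pcomm (pcomm x y) y) = 1 := by
    rw [← mem_bot, ← h5]
    exact commutator_lowerCentralSeries_le ⊤ 2 2 (pcomm_mem_commutator_s2 (hc₂ x) (hc₂ y))
  have hw₂ : pcomm (pcomm (pcomm x y) (y * x)) (pcomm x y) ∈ center G :=
    mem_center_of_mem_lowerCentralSeries h5 <|
      commutator_lowerCentralSeries_le ⊤ 2 1 (pcomm_mem_commutator_s2 (hc₂ (y * x)) hc)
  rw [pcomm_pcomm_pcomm_eq_mul, hw₁, one_mul]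
  exact ⟨pcomm_mul_right_of_mem_center hw₂ _ x, pcomm_mul_right_of_mem_center hw₂ _ y⟩
end

section
/- Let G be a group in which every 2-generated subgroup is nilpotent of class ≤ 5, and suppose [[a,b]^2, a] = 1 for all a, b ∈ G. Then 1 = [a,b,a]^2 · [a,b,a,[a,b]] for all a, b ∈ G. -/
/-!
Put `u = [c,a]` and `e = [u,c]`. Since `[c²,a] = [c,a]^c [c,a] = u e u`, the identity
`[c²,a] = u² e` only needs `e` to commute with `u`. For `c = [a,b]`, `e` has weight `4` and `u`
weight `3 ≥ 2`, so by the three subgroups lemma `[e,u]` lies in the sixth term of the lower central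
series, which is trivial in the class `≤ 5` subgroup `⟨a,b⟩`; there `[c²,a] = 1`.
-/

open scoped commutatorElement

section Pcomm

variable {G : Type*} [Group G]

lemma pcomm_eq_commutatorElement_s13 (x y : G) : pcomm x y = ⁅x⁻¹, y⁻¹⁆ := by
  simp [pcomm, commutatorElement_def]

lemma map_pcomm {H : Type*} [Group H] (f : G →* H) (x y : G) :
    f (pcomm x y) = pcomm (f x) (f y) := by
  simp [pcomm]

lemma pcomm_sq_left (x y : G) :
    pcomm (x ^ 2) y = pcomm x y * pcomm (pcomm x y) x * pcomm x y := by
  simp only [pcomm, sq]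
  group

lemma pcomm_sq_left_of_commute {x y : G} (h : Commute (pcomm x y) (pcomm (pcomm x y) x)) :
    pcomm (x ^ 2) y = pcomm x y ^ 2 * pcomm (pcomm x y) x := by
  rw [pcomm_sq_left, mul_assoc, ← h.eq, ← mul_assoc, ← sq]

lemma pcomm_mem_lowerCentralSeries_succ (S : Subgroup G) {n : ℕ} {x y : G}
    (hx : x ∈ S.lowerCentralSeries n) (hy : y ∈ S) : pcomm x y ∈ S.lowerCentralSeries (n + 1) := by
  rw [pcomm_eq_commutatorElement_s13]
  exact Subgroup.commutator_mem_commutator (inv_mem hx) (inv_mem hy)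

end Pcomm

lemma commutator_lowerCentralSeries_one_eq_bot {K : Type*} [Group K] {n : ℕ}
    (h : (⊤ : Subgroup K).lowerCentralSeries (n + 2) = ⊥) :
    ⁅(⊤ : Subgroup K).lowerCentralSeries n, (⊤ : Subgroup K).lowerCentralSeries 1⁆ = ⊥ := by
  rw [Subgroup.top_lowerCentralSeries_one, commutator_def, Subgroup.commutator_comm]
  apply Subgroup.commutator_commutator_eq_bot_of_rotate
  · rwa [Subgroup.commutator_comm ⊤]
  · exact h

lemma pcomm_sq_eq_of_lowerCentralSeries_five_eq_bot {K : Type*} [Group K]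
    (h5 : (⊤ : Subgroup K).lowerCentralSeries 5 = ⊥) (a b : K) :
    pcomm (pcomm a b ^ 2) a =
      pcomm (pcomm a b) a ^ 2 * pcomm (pcomm (pcomm a b) a) (pcomm a b) := by
  set γ := (⊤ : Subgroup K).lowerCentralSeries
  have hc : pcomm a b ∈ γ 1 := pcomm_mem_lowerCentralSeries_succ ⊤ trivial trivial
  have hu : pcomm (pcomm a b) a ∈ γ 2 := pcomm_mem_lowerCentralSeries_succ ⊤ hc trivial
  have he : pcomm (pcomm (pcomm a b) a) (pcomm a b) ∈ γ 3 :=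
    pcomm_mem_lowerCentralSeries_succ ⊤ hu trivial
  refine pcomm_sq_left_of_commute (commutatorElement_eq_one_iff_commute.mp ?_).symm
  rw [← Subgroup.mem_bot, ← commutator_lowerCentralSeries_one_eq_bot h5]
  exact Subgroup.commutator_mem_commutator he
    (Subgroup.lowerCentralSeries_antitone ⊤ one_le_two hu)

/-- if every 2-generated subgroup of `G` has class ≤ 5 and
`[[a,b]^2,a] = 1` for all `a, b`, then `1 = [a,b,a]^2 · [a,b,a,[a,b]]`. -/
theorem square_comm_expansion {G : Type*} [Group G]
    (h2gen : ∀ a b : G,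
      (⊤ : Subgroup (↥(Subgroup.closure ({a, b} : Set G)))).lowerCentralSeries 5 = ⊥)
    (hsq : ∀ a b : G, pcomm ((pcomm a b) ^ 2) a = 1) :
    ∀ a b : G,
      (1 : G) = (pcomm (pcomm a b) a) ^ 2 *
        pcomm (pcomm (pcomm a b) a) (pcomm a b) := by
  intro a b
  set H := Subgroup.closure ({a, b} : Set G)
  let A : H := ⟨a, Subgroup.subset_closure (by simp)⟩
  let B : H := ⟨b, Subgroup.subset_closure (by simp)⟩
  have key := congrArg H.subtype (pcomm_sq_eq_of_lowerCentralSeries_five_eq_bot (h2gen a b) A B)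
  simp only [map_pcomm, map_mul, map_pow] at key
  rw [← hsq a b]
  exact key
end
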